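/- Let ν be a class (ii) distribution with associated functions f, φ, Φ, let θ ≥ 1, and let F_Φ be the associated divergence-generating function. Let η be a probability measure on [0,∞) with density g such that g(x) ≤ 1 for all sufficiently large x and such that g/f is bounded on every compact interval. If the θ-th moment E_η[X^θ] = ∫₀^∞ x^θ g(x) dx is finite, then D_{F_Φ}(η|ν) < ∞. -/

import Mathlib

open Filter MeasureTheory Set
open scoped ENNReal Topology

noncomputable section

/-- The `F`-divergence `D_F(η|ν)` between a reference density `f` and an
alternative density `g` on `(0,∞)` (the value `⊤` encodes an infinite divergence). -/
def Ddiv (F f g : ℝ → ℝ) : ℝ≥0∞ :=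
  ∫⁻ x in Set.Ioi (0 : ℝ), ENNReal.ofReal (F (g x / f x) * f x)

/-- Generator of the polynomial (α-) divergence: `F(y) = (y^α - 1)/(α(α-1))`. -/
def Falpha (α : ℝ) : ℝ → ℝ := fun y => (y ^ α - 1) / (α * (α - 1))

/-- Class (i): the log-density grows at least linearly, `lim φ(x)/x > c > 0`. -/
def IsClassI (φ : ℝ → ℝ) : Prop :=
  ∃ c : ℝ, 0 < c ∧ ∀ᶠ x in atTop, c < φ x / x

/-- Data witnessing that a distribution with log-density `φ` (density `exp(-φ)`) is of
class (ii): heavier than exponential but lighter than any power law, together with the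
auxiliary function `Φ` and the inverse `Ψ = Φ⁻¹` of its restriction to `[x̄, ∞)`. -/
structure ClassIIData (φ : ℝ → ℝ) : Type where
  xbar : ℝ
  Φ : ℝ → ℝ
  Ψ : ℝ → ℝ
  xbar_pos : 0 < xbar
  tendsto_div_id : Tendsto (fun x => φ x / x) atTop (nhds 0)
  tendsto_div_log : Tendsto (fun x => φ x / Real.log x) atTop atTop
  pos : ∀ x ∈ Set.Ici xbar, 0 < Φ x
  strictConcave : StrictConcaveOn ℝ (Set.Ici xbar) Φ
  smooth : ContDiffOn ℝ 2 Φ (Set.Ici xbar)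
  strictMono : StrictMonoOn Φ (Set.Ici xbar)
  inv_left : ∀ x ∈ Set.Ici xbar, Ψ (Φ x) = x
  inv_right : ∀ y ∈ Set.Ici (Φ xbar), Φ (Ψ y) = y
  liminf_pos : ∃ c : ℝ, 0 < c ∧ ∀ᶠ x in atTop, c ≤ Ψ (φ x) / x
  limsup_lt_top : ∃ C : ℝ, ∀ᶠ x in atTop, Ψ (φ x) / x ≤ C

namespace ClassIIData

variable {φ : ℝ → ℝ}

/-- `ȳ = exp(Φ(x̄))`. -/
def ybar (d : ClassIIData φ) : ℝ := Real.exp (d.Φ d.xbar)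

/-- The constant `a = (1+log ȳ)/(Φ⁻¹(log ȳ)^θ + θ Φ⁻¹(log ȳ)^{θ-1} (Φ⁻¹)'(log ȳ))`. -/
def aconst (d : ClassIIData φ) (θ : ℝ) : ℝ :=
  (1 + Real.log d.ybar) /
    (d.Ψ (Real.log d.ybar) ^ θ +
      θ * d.Ψ (Real.log d.ybar) ^ (θ - 1) * deriv d.Ψ (Real.log d.ybar))

/-- The constant `b = ȳ log ȳ - a ȳ Φ⁻¹(log ȳ)^θ`. -/
def bconst (d : ClassIIData φ) (θ : ℝ) : ℝ :=
  d.ybar * Real.log d.ybar - d.aconst θ * d.ybar * d.Ψ (Real.log d.ybar) ^ θ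

/-- The divergence generator `F_Φ`: `y log y` for `y ≤ ȳ` and
`a y Φ⁻¹(log y)^θ + b` for `y > ȳ`. -/
def FPhi (d : ClassIIData φ) (θ : ℝ) : ℝ → ℝ := fun y =>
  if y ≤ d.ybar then y * Real.log y
  else d.aconst θ * y * d.Ψ (Real.log y) ^ θ + d.bconst θ

/-- `ψ(x) = a Φ⁻¹(x)^θ`. -/
def psiFun (d : ClassIIData φ) (θ : ℝ) : ℝ → ℝ := fun x => d.aconst θ * d.Ψ x ^ θ

/-- The integrand of `I(c) = ∫_c^∞ e^y (ψ(y)+ψ'(y))(ψ'(y)+ψ''(y)) f((F_Φ'(e^y)-α₁)/α₂) dy`. -/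
def Iintegrand (d : ClassIIData φ) (θ α₁ α₂ : ℝ) (f : ℝ → ℝ) : ℝ → ℝ := fun y =>
  Real.exp y * (d.psiFun θ y + deriv (d.psiFun θ) y) *
    (deriv (d.psiFun θ) y + deriv (deriv (d.psiFun θ)) y) *
    f ((deriv (d.FPhi θ) (Real.exp y) - α₁) / α₂)

end ClassIIData

/-- Convex conjugate over `s ≥ 0`: `F*(x) = sup_{s ≥ 0} (x s - F(s))`. -/
def Fstar (F : ℝ → ℝ) : ℝ → ℝ := fun x => sSup ((fun s => x * s - F s) '' Set.Ici (0 : ℝ))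

/-- Pseudo-regular variation: `limsup_{c→1} limsup_{x→∞} h(cx)/h(x) = 1`,
spelled out in ε-form. -/
def PseudoRegularlyVarying (h : ℝ → ℝ) : Prop :=
  (∀ ε > (0:ℝ), ∀ᶠ c in nhds (1:ℝ), ∀ᶠ x in atTop, h (c * x) / h x ≤ 1 + ε) ∧
  (∀ ε > (0:ℝ), ∃ᶠ c in nhds (1:ℝ), ∃ᶠ x in atTop, 1 - ε ≤ h (c * x) / h x)

/-! On `(0, x₀]` the ratio `g/f` is bounded, so `F_Φ(g/f) f` is at most a multiple of `f`.
Beyond `x₀` we have `g ≤ 1`, hence `log (g/f) ≤ φ`, and for `g/f > ȳ` the increasing inverse `Ψ`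
gives `F_Φ(g/f) f ≤ a Ψ(φ x)^θ g + O(f) ≤ a (C x)^θ g + O(f)`, because `Ψ(φ x) ≤ C x` for
class (ii). So `F_Φ(g/f) f ≤ M f + K x^θ g` on `(0, ∞)`, and the right side is integrable. -/

lemma Real.mul_log_le_mul_log_of_le {y b : ℝ} (hy : 0 ≤ y) (hyb : y ≤ b) (hb : 1 ≤ b) :
    y * Real.log y ≤ b * Real.log b := by
  rcases le_or_gt y 1 with hy1 | hy1
  · have : Real.log y ≤ 0 := Real.log_nonpos hy hy1
    have : 0 ≤ b * Real.log b := mul_nonneg (zero_le_one.trans hb) (Real.log_nonneg hb)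
    nlinarith
  · have : Real.log y ≤ Real.log b := Real.log_le_log (zero_lt_one.trans hy1) hyb
    have : 0 ≤ Real.log y := Real.log_nonneg hy1.le
    nlinarith

lemma MeasureTheory.setLIntegral_ofReal_lt_top_of_le {s : Set ℝ} {u v : ℝ → ℝ}
    (hs : MeasurableSet s) (huv : ∀ x ∈ s, u x ≤ v x) (hv : IntegrableOn v s) :
    ∫⁻ x in s, ENNReal.ofReal (u x) < ⊤ :=
  (setLIntegral_mono' hs fun x hx => ENNReal.ofReal_le_ofReal (huv x hx)).trans_lt
    hv.lintegral_lt_top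

namespace ClassIIData

variable {φ : ℝ → ℝ} (d : ClassIIData φ)

lemma tendsto_atTop (d : ClassIIData φ) : Tendsto φ atTop atTop := by
  refine (d.tendsto_div_log.atTop_mul_atTop₀ Real.tendsto_log_atTop).congr' ?_
  filter_upwards [eventually_gt_atTop 1] with x hx
  exact div_mul_cancel₀ _ (Real.log_pos hx).ne'

lemma surjOn_Φ : SurjOn d.Φ (Ici d.xbar) (Ici (d.Φ d.xbar)) := by
  intro y hy
  obtain ⟨c, hc, hcΨ⟩ := d.liminf_pos
  obtain ⟨x, ⟨hcx, hφx⟩, hx⟩ := ((hcΨ.and (d.tendsto_atTop.eventually_ge_atTop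
    (max y (d.Φ d.xbar)))).and (eventually_ge_atTop (max (d.xbar / c) 1))).exists
  have hx0 : 0 < x := zero_lt_one.trans_le ((le_max_right _ _).trans hx)
  have hxbar : d.xbar ≤ d.Ψ (φ x) := calc
    d.xbar = c * (d.xbar / c) := by field_simp
    _ ≤ c * x := mul_le_mul_of_nonneg_left ((le_max_left _ _).trans hx) hc.le
    _ ≤ d.Ψ (φ x) := (le_div_iff₀ hx0).mp hcx
  have hΦΨ : d.Φ (d.Ψ (φ x)) = φ x :=
    d.inv_right _ (mem_Ici.mpr ((le_max_right _ _).trans hφx))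
  obtain ⟨z, hz, rfl⟩ := intermediate_value_Icc hxbar
    (d.smooth.continuousOn.mono Icc_subset_Ici_self)
    ⟨hy, by rw [hΦΨ]; exact (le_max_left _ _).trans hφx⟩
  exact ⟨z, hz.1, rfl⟩

lemma mapsTo_Ψ : MapsTo d.Ψ (Ici (d.Φ d.xbar)) (Ici d.xbar) := by
  rintro _ hy
  obtain ⟨x, hx, rfl⟩ := d.surjOn_Φ hy
  rwa [mem_Ici, d.inv_left x hx]

lemma monotoneOn_Ψ : MonotoneOn d.Ψ (Ici (d.Φ d.xbar)) := by
  rintro _ hu _ hv huv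
  obtain ⟨x, hx, rfl⟩ := d.surjOn_Φ hu
  obtain ⟨z, hz, rfl⟩ := d.surjOn_Φ hv
  rw [d.inv_left x hx, d.inv_left z hz]
  exact (d.strictMono.le_iff_le hx hz).mp huv

lemma log_ybar : Real.log d.ybar = d.Φ d.xbar := Real.log_exp _

lemma one_lt_ybar : 1 < d.ybar :=
  Real.one_lt_exp_iff.mpr (d.pos _ self_mem_Ici)

lemma FPhi_le {θ y t : ℝ} (hθ : 0 ≤ θ) (hy : 0 ≤ y) (hyt : y ≤ Real.exp t)
    (ht : d.Φ d.xbar ≤ t) :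
    d.FPhi θ y ≤ max (d.ybar * Real.log d.ybar) (d.bconst θ) +
      max (d.aconst θ) 0 * y * d.Ψ t ^ θ := by
  have hΨt : 0 < d.Ψ t := d.xbar_pos.trans_le (d.mapsTo_Ψ ht)
  unfold FPhi
  split_ifs with hyb
  · have : 0 ≤ max (d.aconst θ) 0 * y * d.Ψ t ^ θ :=
      mul_nonneg (mul_nonneg (le_max_right _ _) hy) (Real.rpow_nonneg hΨt.le _)
    have := Real.mul_log_le_mul_log_of_le hy hyb d.one_lt_ybar.le
    have := le_max_left (d.ybar * Real.log d.ybar) (d.bconst θ)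
    linarith
  · have hy0 : 0 < y := (zero_lt_one.trans d.one_lt_ybar).trans (not_le.mp hyb)
    have hlog : d.Φ d.xbar ≤ Real.log y := by
      rw [← d.log_ybar]
      exact Real.log_le_log (zero_lt_one.trans d.one_lt_ybar) (not_le.mp hyb).le
    have hΨy : 0 ≤ d.Ψ (Real.log y) := d.xbar_pos.le.trans (d.mapsTo_Ψ hlog)
    have hΨ : d.Ψ (Real.log y) ^ θ ≤ d.Ψ t ^ θ :=
      Real.rpow_le_rpow hΨy (d.monotoneOn_Ψ hlog ht ((Real.log_le_iff_le_exp hy0).mpr hyt)) hθ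
    have hpos : 0 ≤ y * d.Ψ (Real.log y) ^ θ := mul_nonneg hy (Real.rpow_nonneg hΨy _)
    calc d.aconst θ * y * d.Ψ (Real.log y) ^ θ + d.bconst θ
        ≤ max (d.aconst θ) 0 * (y * d.Ψ (Real.log y) ^ θ) +
            max (d.ybar * Real.log d.ybar) (d.bconst θ) := by
          rw [mul_assoc]
          exact add_le_add (mul_le_mul_of_nonneg_right (le_max_left _ _) hpos) (le_max_right _ _)
      _ ≤ max (d.aconst θ) 0 * (y * d.Ψ t ^ θ) +
            max (d.ybar * Real.log d.ybar) (d.bconst θ) := by gcongr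
      _ = _ := by ring

lemma FPhi_div_mul_le {θ t u v : ℝ} (hθ : 0 ≤ θ) (hu : 0 ≤ u) (hv : 0 < v)
    (huv : u ≤ Real.exp t * v) (ht : d.Φ d.xbar ≤ t) :
    d.FPhi θ (u / v) * v ≤ max (d.ybar * Real.log d.ybar) (d.bconst θ) * v +
      max (d.aconst θ) 0 * d.Ψ t ^ θ * u := by
  have h := d.FPhi_le hθ (div_nonneg hu hv.le) ((div_le_iff₀ hv).mpr huv) ht
  calc d.FPhi θ (u / v) * v
      ≤ (max (d.ybar * Real.log d.ybar) (d.bconst θ) +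
          max (d.aconst θ) 0 * (u / v) * d.Ψ t ^ θ) * v := mul_le_mul_of_nonneg_right h hv.le
    _ = _ := by field_simp

lemma FPhi_div_mul_le_of_le_mul {θ Y u v : ℝ} (hθ : 0 ≤ θ) (hu : 0 ≤ u) (hv : 0 < v)
    (huv : u ≤ Y * v) (hY : d.ybar ≤ Y) :
    d.FPhi θ (u / v) * v ≤ (max (d.ybar * Real.log d.ybar) (d.bconst θ) +
      max (d.aconst θ) 0 * d.Ψ (Real.log Y) ^ θ * Y) * v := by
  have hY0 : 0 < Y := (zero_lt_one.trans d.one_lt_ybar).trans_le hY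
  have hlogY : d.Φ d.xbar ≤ Real.log Y :=
    d.log_ybar ▸ Real.log_le_log (zero_lt_one.trans d.one_lt_ybar) hY
  have h := d.FPhi_div_mul_le hθ hu hv (by rwa [Real.exp_log hY0]) hlogY
  have := mul_le_mul_of_nonneg_left huv (mul_nonneg (le_max_right (d.aconst θ) 0)
    (Real.rpow_nonneg (d.xbar_pos.le.trans (d.mapsTo_Ψ hlogY)) θ))
  linarith

lemma FPhi_div_exp_neg_mul_le {θ C s u x : ℝ} (hθ : 0 ≤ θ) (hu : 0 ≤ u) (hu1 : u ≤ 1)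
    (hx : 0 < x) (hC : 0 ≤ C) (hs : d.Φ d.xbar ≤ s) (hΨs : d.Ψ s ≤ C * x) :
    d.FPhi θ (u / Real.exp (-s)) * Real.exp (-s) ≤
      max (d.ybar * Real.log d.ybar) (d.bconst θ) * Real.exp (-s) +
        max (d.aconst θ) 0 * C ^ θ * (x ^ θ * u) := by
  have h := d.FPhi_div_mul_le hθ hu (Real.exp_pos _)
    (by rwa [← Real.exp_add, add_neg_cancel, Real.exp_zero]) hs
  have hΨ : d.Ψ s ^ θ ≤ C ^ θ * x ^ θ := by
    rw [← Real.mul_rpow hC hx.le]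
    exact Real.rpow_le_rpow (d.xbar_pos.le.trans (d.mapsTo_Ψ hs)) hΨs hθ
  have := mul_le_mul_of_nonneg_left (mul_le_mul_of_nonneg_right hΨ hu)
    (le_max_right (d.aconst θ) 0)
  linarith

end ClassIIData

theorem stmt9_general
    (φ f : ℝ → ℝ)
    (hf : ∀ x ∈ Set.Ioi (0:ℝ), f x = Real.exp (-(φ x)))
    (hfint : ∫ x in Set.Ioi (0:ℝ), f x = 1)
    (d : ClassIIData φ) (θ : ℝ) (hθ : 1 ≤ θ)
    (g : ℝ → ℝ)
    (hg0 : ∀ x ∈ Set.Ioi (0:ℝ), 0 ≤ g x)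
    (hg1 : ∀ᶠ x in atTop, g x ≤ 1)
    (hratio : ∀ K : Set ℝ, IsCompact K → ∃ C : ℝ, ∀ x ∈ K ∩ Set.Ioi (0:ℝ), g x / f x ≤ C)
    (hmom : IntegrableOn (fun x => x ^ θ * g x) (Set.Ioi 0)) :
    Ddiv (d.FPhi θ) f g < ⊤ := by
  have hθ0 : 0 ≤ θ := zero_le_one.trans hθ
  obtain ⟨C, hC⟩ := d.limsup_lt_top
  obtain ⟨x₀, hx₀⟩ := eventually_atTop.mp
    (hg1.and (hC.and (d.tendsto_atTop.eventually_ge_atTop (d.Φ d.xbar))))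
  obtain ⟨R, hR⟩ := hratio (Icc 0 x₀) isCompact_Icc
  set Y := max R d.ybar
  set M₀ := max (d.ybar * Real.log d.ybar) (d.bconst θ)
  set a := max (d.aconst θ) 0
  have ha : 0 ≤ a := le_max_right _ _
  have hlogY : d.Φ d.xbar ≤ Real.log Y :=
    d.log_ybar ▸ Real.log_le_log (zero_lt_one.trans d.one_lt_ybar) (le_max_right _ _)
  set M := M₀ + a * d.Ψ (Real.log Y) ^ θ * Y
  set K := a * max C 0 ^ θ
  have hM₀M : M₀ ≤ M := le_add_of_nonneg_right <| mul_nonneg (mul_nonneg ha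
    (Real.rpow_nonneg (d.xbar_pos.le.trans (d.mapsTo_Ψ hlogY)) θ))
    ((zero_lt_one.trans d.one_lt_ybar).le.trans (le_max_right _ _))
  have bound : ∀ x ∈ Ioi 0, d.FPhi θ (g x / f x) * f x ≤ M * f x + K * (x ^ θ * g x) := by
    intro x hx
    have hfx : 0 < f x := hf x hx ▸ Real.exp_pos _
    have hgx := hg0 x hx
    have hKx : 0 ≤ K * (x ^ θ * g x) := mul_nonneg
      (mul_nonneg ha (Real.rpow_nonneg (le_max_right C 0) θ))
      (mul_nonneg (Real.rpow_nonneg hx.le θ) hgx)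
    rcases le_total x x₀ with hxx₀ | hx₀x
    · have hgY : g x ≤ Y * f x :=
        (div_le_iff₀ hfx).mp ((hR x ⟨⟨hx.le, hxx₀⟩, hx⟩).trans (le_max_left _ _))
      linarith [d.FPhi_div_mul_le_of_le_mul hθ0 hgx hfx hgY (le_max_right R d.ybar)]
    · obtain ⟨hg1x, hCx, hφx⟩ := hx₀ x hx₀x
      have hΨφ : d.Ψ (φ x) ≤ max C 0 * x :=
        ((div_le_iff₀ hx).mp hCx).trans (mul_le_mul_of_nonneg_right (le_max_left _ _) hx.le)
      rw [hf x hx] at hfx ⊢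
      linarith [d.FPhi_div_exp_neg_mul_le hθ0 hgx hg1x hx (le_max_right _ _) hφx hΨφ,
        mul_le_mul_of_nonneg_right hM₀M hfx.le]
  exact setLIntegral_ofReal_lt_top_of_le measurableSet_Ioi bound
    (((integrable_of_integral_eq_one hfint).const_mul _).add (hmom.const_mul _))

/-- Proposition 4.4: a finite θ-th moment yields a finite `F_Φ`-divergence. -/
theorem stmt9
    (φ f : ℝ → ℝ)
    (hf : ∀ x ∈ Set.Ioi (0:ℝ), f x = Real.exp (-(φ x)))
    (hfc : ContinuousOn f (Set.Ioi 0))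
    (hfint : ∫ x in Set.Ioi (0:ℝ), f x = 1)
    (d : ClassIIData φ) (θ : ℝ) (hθ : 1 ≤ θ)
    (g : ℝ → ℝ) (hgc : ContinuousOn g (Set.Ioi 0))
    (hg0 : ∀ x ∈ Set.Ioi (0:ℝ), 0 ≤ g x)
    (hgint : ∫ x in Set.Ioi (0:ℝ), g x = 1)
    (hg1 : ∀ᶠ x in atTop, g x ≤ 1)
    (hratio : ∀ K : Set ℝ, IsCompact K → ∃ C : ℝ, ∀ x ∈ K ∩ Set.Ioi (0:ℝ), g x / f x ≤ C)
    (hmom : IntegrableOn (fun x => x ^ θ * g x) (Set.Ioi 0)) :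
    Ddiv (d.FPhi θ) f g < ⊤ :=
  stmt9_general φ f hf hfint d θ hθ g hg0 hg1 hratio hmom
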